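/- Let r : ℤ → ℝ be strictly increasing, Z the swapping ring of (ℤ, r), Q its fraction field, and {·,·} a swapping bracket on Q; write [P,Q'] := {P,Q'}/(P·Q'). Then for every k ∈ ℤ: [ (x_{k−1,k+1}/x_{k−1,k})·(x_{k+2,k}/x_{k+2,k+1}) , (x_{k,k+2}/x_{k,k+1})·(x_{k+3,k+1}/x_{k+3,k+2}) ] = −1 + (x_{k−1,k+2}·x_{k,k+1})/(x_{k−1,k+1}·x_{k,k+2}) + (x_{k+2,k+1}·x_{k+3,k})/(x_{k+2,k}·x_{k+3,k+1}), where x_{a,b} denotes the generator of Z indexed by the pair (a,b). -/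
import Mathlib


noncomputable section

/-- The linking number `J(r,x,s,y)` of two pairs of points on the (cut) circle. -/
def linkJ (r x s y : ℝ) : ℝ :=
  (1 / 2) * (Real.sign (r - x) * Real.sign (r - y) * Real.sign (y - x)
    - Real.sign (r - x) * Real.sign (r - s) * Real.sign (s - x))

/-- The swapping ring `Z` of `(ℤ, r)`: the quotient of `ℝ[x_{ab} : (a,b) ∈ ℤ × ℤ]`
by the ideal generated by the variables `x_{aa}`, presented canonically as the
polynomial ring on the off-diagonal generators `x_{ab}`, `a ≠ b`. -/
abbrev SwapRingZ : Type := MvPolynomial {p : ℤ × ℤ // p.1 ≠ p.2} ℝ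

/-- `Q`, the fraction field of the swapping ring. -/
abbrev SwapFieldZ : Type := FractionRing SwapRingZ

/-- The generator `x_{a,b}` viewed inside the fraction field `Q`
(it is `0` when `a = b`, reflecting the relation `x_{aa} = 0`). -/
def xg (a b : ℤ) : SwapFieldZ :=
  if h : a = b then 0
  else algebraMap SwapRingZ SwapFieldZ (MvPolynomial.X ⟨(a, b), h⟩)

set_option maxHeartbeats 1000000 in
/-- For a swapping bracket `{·,·}` on the fraction field `Q` of the swapping
ring of `(ℤ, r)` with `r` strictly increasing, writing `[P,Q'] = {P,Q'}/(P·Q')`,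
one has, for all `k`:
`[(x_{k−1,k+1}/x_{k−1,k})·(x_{k+2,k}/x_{k+2,k+1}), (x_{k,k+2}/x_{k,k+1})·(x_{k+3,k+1}/x_{k+3,k+2})]`
`= −1 + x_{k−1,k+2}x_{k,k+1}/(x_{k−1,k+1}x_{k,k+2}) + x_{k+2,k+1}x_{k+3,k}/(x_{k+2,k}x_{k+3,k+1})`. -/
theorem swapping_bracket_adjacent_cross_ratios (r : ℤ → ℝ) (hr : StrictMono r)
    (br : SwapFieldZ → SwapFieldZ → SwapFieldZ)
    -- `{·,·}` is ℝ-bilinear, antisymmetric, and a derivation in each argument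
    (h_add : ∀ x y z : SwapFieldZ, br (x + y) z = br x z + br y z)
    (h_smul : ∀ (c : ℝ) (x y : SwapFieldZ), br (c • x) y = c • br x y)
    (h_anti : ∀ x y : SwapFieldZ, br x y = - br y x)
    (h_leib : ∀ x y z : SwapFieldZ, br (x * y) z = x * br y z + y * br x z)
    -- values on the generators
    (h_gen : ∀ a b c d : ℤ,
      br (xg a b) (xg c d) =
        linkJ (r a) (r b) (r c) (r d) • (xg a d * xg c b)) :
    ∀ k : ℤ,
      br (xg (k - 1) (k + 1) / xg (k - 1) k * (xg (k + 2) k / xg (k + 2) (k + 1)))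
         (xg k (k + 2) / xg k (k + 1) * (xg (k + 3) (k + 1) / xg (k + 3) (k + 2))) /
        ((xg (k - 1) (k + 1) / xg (k - 1) k * (xg (k + 2) k / xg (k + 2) (k + 1))) *
         (xg k (k + 2) / xg k (k + 1) * (xg (k + 3) (k + 1) / xg (k + 3) (k + 2)))) =
      -1 + xg (k - 1) (k + 2) * xg k (k + 1) / (xg (k - 1) (k + 1) * xg k (k + 2))
         + xg (k + 2) (k + 1) * xg (k + 3) k / (xg (k + 2) k * xg (k + 3) (k + 1)) := by
  -- generators are nonzero off the diagonal, zero on the diagonal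
  have hx : ∀ a b : ℤ, a ≠ b → xg a b ≠ 0 := by
    intro a b h
    simp only [xg, dif_neg h]
    exact (map_ne_zero_iff _ (IsFractionRing.injective SwapRingZ SwapFieldZ)).mpr
      (MvPolynomial.X_ne_zero _)
  have hxz : ∀ a : ℤ, xg a a = 0 := by intro a; simp [xg]
  -- sign evaluations
  have hs : ∀ a b : ℤ, a < b → Real.sign (r a - r b) = -1 := fun a b h =>
    Real.sign_of_neg (sub_neg.mpr (hr h))
  have hs' : ∀ a b : ℤ, a < b → Real.sign (r b - r a) = 1 := fun a b h =>
    Real.sign_of_pos (sub_pos.mpr (hr h))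
  -- scalar helper
  have hhalf : ∀ x : SwapFieldZ, (1 / 2 : ℝ) • x = x / 2 := by
    intro x
    rw [Algebra.smul_def, map_div₀, map_one, map_ofNat]
    ring
  -- logarithmic-bracket algebra
  have h1 : ∀ w : SwapFieldZ, br 1 w = 0 := by
    intro w
    have h := h_leib 1 1 w
    simp only [one_mul] at h
    exact left_eq_add.mp h
  have Lanti : ∀ u v : SwapFieldZ, br u v / (u * v) = -(br v u / (v * u)) := by
    intro u v; rw [h_anti, mul_comm v u]; ring
  have Lmul : ∀ u v w : SwapFieldZ, u ≠ 0 → v ≠ 0 → w ≠ 0 →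
      br (u * v) w / (u * v * w) = br u w / (u * w) + br v w / (v * w) := by
    intro u v w hu hv hw
    rw [h_leib]
    field_simp
    ring
  have Linv : ∀ v w : SwapFieldZ, v ≠ 0 → w ≠ 0 →
      br v⁻¹ w / (v⁻¹ * w) = -(br v w / (v * w)) := by
    intro v w hv hw
    have he := h_leib v v⁻¹ w
    rw [mul_inv_cancel₀ hv, h1] at he
    have e3 : br v⁻¹ w = -(v⁻¹ * (v⁻¹ * br v w)) := by
      have h4 : v⁻¹ * (v * br v⁻¹ w) = v⁻¹ * (-(v⁻¹ * br v w)) := by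
        rw [show v * br v⁻¹ w = -(v⁻¹ * br v w) by linear_combination -he]
      rw [← mul_assoc, inv_mul_cancel₀ hv, one_mul] at h4
      rw [h4]
      ring
    rw [e3]
    field_simp
  have Ldiv : ∀ u v w : SwapFieldZ, u ≠ 0 → v ≠ 0 → w ≠ 0 →
      br (u / v) w / (u / v * w) = br u w / (u * w) - br v w / (v * w) := by
    intro u v w hu hv hw
    rw [div_eq_mul_inv u v, Lmul u v⁻¹ w hu (inv_ne_zero hv) hw, Linv v w hv hw]
    ring
  have expand : ∀ u v w t z : SwapFieldZ, u ≠ 0 → v ≠ 0 → w ≠ 0 → t ≠ 0 → z ≠ 0 →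
      br (u / v * (w / t)) z / (u / v * (w / t) * z) =
        br u z / (u * z) - br v z / (v * z) + br w z / (w * z) - br t z / (t * z) := by
    intro u v w t z hu hv hw ht hz
    rw [Lmul _ _ _ (div_ne_zero hu hv) (div_ne_zero hw ht) hz, Ldiv u v z hu hv hz,
      Ldiv w t z hw ht hz]
    ring
  have expandR : ∀ z u v w t : SwapFieldZ, u ≠ 0 → v ≠ 0 → w ≠ 0 → t ≠ 0 → z ≠ 0 →
      br z (u / v * (w / t)) / (z * (u / v * (w / t))) =
        br z u / (z * u) - br z v / (z * v) + br z w / (z * w) - br z t / (z * t) := by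
    intro z u v w t hu hv hw ht hz
    rw [Lanti z (u / v * (w / t)), expand u v w t z hu hv hw ht hz, Lanti u z, Lanti v z,
      Lanti w z, Lanti t z]
    ring
  intro k
  have hA := hx (k - 1) (k + 1) (by omega)
  have hB := hx (k - 1) k (by omega)
  have hC := hx (k + 2) k (by omega)
  have hD := hx (k + 2) (k + 1) (by omega)
  have hE := hx k (k + 2) (by omega)
  have hF := hx k (k + 1) (by omega)
  have hG := hx (k + 3) (k + 1) (by omega)
  have hH := hx (k + 3) (k + 2) (by omega)
  have hQ : xg k (k + 2) / xg k (k + 1) * (xg (k + 3) (k + 1) / xg (k + 3) (k + 2)) ≠ 0 :=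
    mul_ne_zero (div_ne_zero hE hF) (div_ne_zero hG hH)
  -- linking number values
  have JAE : linkJ (r (k - 1)) (r (k + 1)) (r k) (r (k + 2)) = 1 := by
    rw [linkJ, hs (k - 1) (k + 1) (by omega), hs (k - 1) (k + 2) (by omega),
      hs' (k + 1) (k + 2) (by omega), hs (k - 1) k (by omega), hs k (k + 1) (by omega)]
    norm_num
  have JAF : linkJ (r (k - 1)) (r (k + 1)) (r k) (r (k + 1)) = 1 / 2 := by
    rw [linkJ, hs (k - 1) (k + 1) (by omega), sub_self, Real.sign_zero,
      hs (k - 1) k (by omega), hs k (k + 1) (by omega)]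
    norm_num
  have JAG : linkJ (r (k - 1)) (r (k + 1)) (r (k + 3)) (r (k + 1)) = -(1 / 2) := by
    rw [linkJ, hs (k - 1) (k + 1) (by omega), sub_self, Real.sign_zero,
      hs (k - 1) (k + 3) (by omega), hs' (k + 1) (k + 3) (by omega)]
    norm_num
  have JAH : linkJ (r (k - 1)) (r (k + 1)) (r (k + 3)) (r (k + 2)) = 0 := by
    rw [linkJ, hs (k - 1) (k + 1) (by omega), hs (k - 1) (k + 2) (by omega),
      hs' (k + 1) (k + 2) (by omega), hs (k - 1) (k + 3) (by omega),
      hs' (k + 1) (k + 3) (by omega)]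
    norm_num
  have JBG : linkJ (r (k - 1)) (r k) (r (k + 3)) (r (k + 1)) = 0 := by
    rw [linkJ, hs (k - 1) k (by omega), hs (k - 1) (k + 1) (by omega),
      hs' k (k + 1) (by omega), hs (k - 1) (k + 3) (by omega), hs' k (k + 3) (by omega)]
    norm_num
  have JBH : linkJ (r (k - 1)) (r k) (r (k + 3)) (r (k + 2)) = 0 := by
    rw [linkJ, hs (k - 1) k (by omega), hs (k - 1) (k + 2) (by omega),
      hs' k (k + 2) (by omega), hs (k - 1) (k + 3) (by omega), hs' k (k + 3) (by omega)]
    norm_num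
  have JCG : linkJ (r (k + 2)) (r k) (r (k + 3)) (r (k + 1)) = 1 := by
    rw [linkJ, hs' k (k + 2) (by omega), hs' (k + 1) (k + 2) (by omega),
      hs' k (k + 1) (by omega), hs (k + 2) (k + 3) (by omega), hs' k (k + 3) (by omega)]
    norm_num
  have JDF : linkJ (r (k + 2)) (r (k + 1)) (r k) (r (k + 1)) = 1 / 2 := by
    rw [linkJ, hs' (k + 1) (k + 2) (by omega), sub_self, Real.sign_zero,
      hs' k (k + 2) (by omega), hs k (k + 1) (by omega)]
    norm_num
  have JDG : linkJ (r (k + 2)) (r (k + 1)) (r (k + 3)) (r (k + 1)) = 1 / 2 := by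
    rw [linkJ, hs' (k + 1) (k + 2) (by omega), sub_self, Real.sign_zero,
      hs (k + 2) (k + 3) (by omega), hs' (k + 1) (k + 3) (by omega)]
    norm_num
  -- the sixteen elementary logarithmic brackets
  have tAE : br (xg (k - 1) (k + 1)) (xg k (k + 2)) / (xg (k - 1) (k + 1) * xg k (k + 2))
      = xg (k - 1) (k + 2) * xg k (k + 1) / (xg (k - 1) (k + 1) * xg k (k + 2)) := by
    rw [h_gen, JAE, one_smul]
  have tAF : br (xg (k - 1) (k + 1)) (xg k (k + 1)) / (xg (k - 1) (k + 1) * xg k (k + 1))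
      = 1 / 2 := by
    rw [h_gen, JAF, hhalf]
    field_simp
  have tAG : br (xg (k - 1) (k + 1)) (xg (k + 3) (k + 1)) /
      (xg (k - 1) (k + 1) * xg (k + 3) (k + 1)) = -(1 / 2) := by
    rw [h_gen, JAG, neg_smul, hhalf]
    field_simp
  have tAH : br (xg (k - 1) (k + 1)) (xg (k + 3) (k + 2)) /
      (xg (k - 1) (k + 1) * xg (k + 3) (k + 2)) = 0 := by
    rw [h_gen, JAH, zero_smul, zero_div]
  have tBE : br (xg (k - 1) k) (xg k (k + 2)) / (xg (k - 1) k * xg k (k + 2)) = 0 := by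
    rw [h_gen, hxz k]
    simp
  have tBF : br (xg (k - 1) k) (xg k (k + 1)) / (xg (k - 1) k * xg k (k + 1)) = 0 := by
    rw [h_gen, hxz k]
    simp
  have tBG : br (xg (k - 1) k) (xg (k + 3) (k + 1)) / (xg (k - 1) k * xg (k + 3) (k + 1))
      = 0 := by
    rw [h_gen, JBG, zero_smul, zero_div]
  have tBH : br (xg (k - 1) k) (xg (k + 3) (k + 2)) / (xg (k - 1) k * xg (k + 3) (k + 2))
      = 0 := by
    rw [h_gen, JBH, zero_smul, zero_div]
  have tCE : br (xg (k + 2) k) (xg k (k + 2)) / (xg (k + 2) k * xg k (k + 2)) = 0 := by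
    rw [h_gen, hxz (k + 2)]
    simp
  have tCF : br (xg (k + 2) k) (xg k (k + 1)) / (xg (k + 2) k * xg k (k + 1)) = 0 := by
    rw [h_gen, hxz k]
    simp
  have tCG : br (xg (k + 2) k) (xg (k + 3) (k + 1)) / (xg (k + 2) k * xg (k + 3) (k + 1))
      = xg (k + 2) (k + 1) * xg (k + 3) k / (xg (k + 2) k * xg (k + 3) (k + 1)) := by
    rw [h_gen, JCG, one_smul]
  have tCH : br (xg (k + 2) k) (xg (k + 3) (k + 2)) / (xg (k + 2) k * xg (k + 3) (k + 2))
      = 0 := by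
    rw [h_gen, hxz (k + 2)]
    simp
  have tDE : br (xg (k + 2) (k + 1)) (xg k (k + 2)) / (xg (k + 2) (k + 1) * xg k (k + 2))
      = 0 := by
    rw [h_gen, hxz (k + 2)]
    simp
  have tDF : br (xg (k + 2) (k + 1)) (xg k (k + 1)) / (xg (k + 2) (k + 1) * xg k (k + 1))
      = 1 / 2 := by
    rw [h_gen, JDF, hhalf]
    field_simp
  have tDG : br (xg (k + 2) (k + 1)) (xg (k + 3) (k + 1)) /
      (xg (k + 2) (k + 1) * xg (k + 3) (k + 1)) = 1 / 2 := by
    rw [h_gen, JDG, hhalf]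
    field_simp
  have tDH : br (xg (k + 2) (k + 1)) (xg (k + 3) (k + 2)) /
      (xg (k + 2) (k + 1) * xg (k + 3) (k + 2)) = 0 := by
    rw [h_gen, hxz (k + 2)]
    simp
  rw [expand _ _ _ _ _ hA hB hC hD hQ,
    expandR _ _ _ _ _ hE hF hG hH hA, expandR _ _ _ _ _ hE hF hG hH hB,
    expandR _ _ _ _ _ hE hF hG hH hC, expandR _ _ _ _ _ hE hF hG hH hD,
    tAE, tAF, tAG, tAH, tBE, tBF, tBG, tBH, tCE, tCF, tCG, tCH, tDE, tDF, tDG, tDH]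
  ring
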